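/- arXiv:2105.12615 — 3 statements merged into one kernel-verified Lean document; each statement's English description precedes it below -/
import Mathlib

section
/- If Y ~ SBM(θ, B) is a stochastic block model network with membership vector θ ∈ [k]^n and symmetric connectivity matrix B ∈ (0,1]^{k×k}, and M_ε is the symmetric edge-flip mechanism with ε > 0, then M_ε(Y) ~ SBM(θ, τ_ε(B)), where τ_ε(B) = (1/(e^ε+1)) 1_k 1_k^T + ((e^ε−1)/(e^ε+1)) B. That is, the stochastic block model family is closed under edge flipping, with the same block memberships. -/
/-!
STATEMENT 4: If `Y ~ SBM(θ, B)` with membership vector `θ ∈ [k]^n` and symmetric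
connectivity matrix `B ∈ (0,1]^{k×k}`, and `M_ε` is the symmetric edge-flip mechanism
with ε > 0, then `M_ε(Y) ~ SBM(θ, τ_ε(B))` where
`τ_ε(B) = (1/(e^ε+1)) 1 1ᵀ + ((e^ε−1)/(e^ε+1)) B`: the SBM family is closed under edge
flipping, with the same block memberships.

The law of `M_ε(Y)` is the push-forward of the SBM law through the mechanism's
transition mass function; the statement asserts it coincides with the SBM law with
connectivity `τ_ε(B)` at every output network `A`.
-/

open scoped BigOperators

noncomputable section

attribute [local instance] Classical.propDecidable

/-- Randomized-response transition probability on one bit. -/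
def rrProb (ε : ℝ) (b b' : Bool) : ℝ :=
  if b' = b then Real.exp ε / (1 + Real.exp ε) else 1 / (1 + Real.exp ε)

/-- The set of upper-triangular index pairs `i < j`. -/
def pairsLT (n : ℕ) : Finset (Fin n × Fin n) :=
  Finset.univ.filter fun p => p.1 < p.2

/-- A valid undirected binary network: symmetric with zero diagonal. -/
def IsNet {n : ℕ} (Y : Fin n → Fin n → Bool) : Prop :=
  (∀ i j, Y i j = Y j i) ∧ ∀ i, Y i i = false

/-- Mass function of the symmetric edge-flip mechanism. -/
def efMass (ε : ℝ) {n : ℕ} (Y A : Fin n → Fin n → Bool) : ℝ :=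
  if IsNet A then ∏ p ∈ pairsLT n, rrProb ε (Y p.1 p.2) (A p.1 p.2) else 0

/-- Mass at `b` of a Bernoulli(`p`) random bit. -/
def bern (p : ℝ) (b : Bool) : ℝ := if b then p else 1 - p

/-- Probability mass function of the stochastic block model `SBM(θ, B)`: upper
triangular entries are independent `Bernoulli(B (θ i) (θ j))`, the adjacency matrix is
symmetric with zero diagonal. -/
def sbmMass {n k : ℕ} (θ : Fin n → Fin k) (B : Matrix (Fin k) (Fin k) ℝ)
    (Y : Fin n → Fin n → Bool) : ℝ :=
  if IsNet Y then ∏ p ∈ pairsLT n, bern (B (θ p.1) (θ p.2)) (Y p.1 p.2) else 0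

lemma mem_pairsLT {n : ℕ} (p : Fin n × Fin n) : p ∈ pairsLT n ↔ p.1 < p.2 := by
  simp [pairsLT]

def netOf {n : ℕ} (g : ↥(pairsLT n) → Bool) : Fin n → Fin n → Bool :=
  fun i j =>
    if h : i < j then g ⟨(i, j), (mem_pairsLT _).2 h⟩
    else if h' : j < i then g ⟨(j, i), (mem_pairsLT _).2 h'⟩
    else false

lemma isNet_netOf {n : ℕ} (g : ↥(pairsLT n) → Bool) : IsNet (netOf g) := by
  constructor
  · intro i j
    rcases lt_trichotomy i j with h | h | h
    · simp [netOf, h, not_lt_of_gt h]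
    · simp [netOf, h, lt_irrefl]
    · simp [netOf, h, not_lt_of_gt h]
  · intro i; simp [netOf]

lemma netOf_pair {n : ℕ} (g : ↥(pairsLT n) → Bool) (p : ↥(pairsLT n)) :
    netOf g p.1.1 p.1.2 = g p := by
  have hp : p.1.1 < p.1.2 := (mem_pairsLT _).1 p.2
  simp only [netOf, dif_pos hp]

def netEquiv (n : ℕ) : {Y : Fin n → Fin n → Bool // IsNet Y} ≃ (↥(pairsLT n) → Bool) where
  toFun Y p := Y.1 p.1.1 p.1.2
  invFun g := ⟨netOf g, isNet_netOf g⟩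
  left_inv := by
    rintro ⟨Y, hsym, hdiag⟩
    ext i j
    rcases lt_trichotomy i j with h | h | h
    · simp [netOf, h]
    · subst h; simp [netOf, hdiag i]
    · simp [netOf, h, not_lt_of_gt h, hsym i j]
  right_inv := by
    intro g
    funext p
    exact netOf_pair g p

lemma rr_key (ε q : ℝ) (a : Bool) :
    ∑ b : Bool, bern q b * rrProb ε b a
      = bern (1 / (Real.exp ε + 1) + (Real.exp ε - 1) / (Real.exp ε + 1) * q) a := by
  have h : (1 : ℝ) + Real.exp ε ≠ 0 := by positivity
  have h' : Real.exp ε + 1 ≠ 0 := by positivity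
  cases a <;> simp [bern, rrProb, Fintype.sum_bool] <;> field_simp <;> ring

/-- the SBM family is closed under the edge-flip mechanism:
`M_ε(SBM(θ, B)) = SBM(θ, τ_ε(B))` with
`τ_ε(B) = 1/(e^ε+1) · 1 1ᵀ + (e^ε−1)/(e^ε+1) · B`. -/
theorem sbm_closed_under_edgeFlip (n k : ℕ) (ε : ℝ) (hε : 0 < ε)
    (θ : Fin n → Fin k) (B : Matrix (Fin k) (Fin k) ℝ)
    (hBsym : B.IsSymm) (hB : ∀ a b, 0 < B a b ∧ B a b ≤ 1) :
    ∀ A : Fin n → Fin n → Bool,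
      ∑ Y, sbmMass θ B Y * efMass ε Y A =
        sbmMass θ
          (Matrix.of fun a b =>
            1 / (Real.exp ε + 1) + (Real.exp ε - 1) / (Real.exp ε + 1) * B a b) A := by
  intro A
  by_cases hA : IsNet A
  · set h : Fin n × Fin n → Bool → ℝ := fun p b =>
      bern (B (θ p.1) (θ p.2)) b * rrProb ε b (A p.1 p.2) with hh
    calc ∑ Y, sbmMass θ B Y * efMass ε Y A
        = ∑ Y, (if IsNet Y then ∏ p ∈ pairsLT n, h p (Y p.1 p.2) else 0) := by
          refine Finset.sum_congr rfl fun Y _ => ?_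
          simp only [sbmMass, efMass, if_pos hA, hh]
          split_ifs with hy
          · rw [← Finset.prod_mul_distrib]
          · simp
      _ = ∑ Y ∈ Finset.univ.filter IsNet, ∏ p ∈ pairsLT n, h p (Y p.1 p.2) := by
          rw [Finset.sum_filter]
      _ = ∑ Y : {Y : Fin n → Fin n → Bool // IsNet Y}, ∏ p ∈ pairsLT n, h p (Y.1 p.1 p.2) := by
          refine Finset.sum_subtype _ (fun Y => ?_) _
          simp
      _ = ∑ g : ↥(pairsLT n) → Bool, ∏ p ∈ pairsLT n, h p (netOf g p.1 p.2) := by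
          rw [← Equiv.sum_comp (netEquiv n).symm
            (fun Y : {Y : Fin n → Fin n → Bool // IsNet Y} =>
              ∏ p ∈ pairsLT n, h p (Y.1 p.1 p.2))]
          rfl
      _ = ∑ g : ↥(pairsLT n) → Bool, ∏ p : ↥(pairsLT n), h p.1 (g p) := by
          refine Finset.sum_congr rfl fun g _ => ?_
          rw [Finset.univ_eq_attach, ← Finset.prod_attach (pairsLT n)
            (fun p => h p (netOf g p.1 p.2))]
          exact Finset.prod_congr rfl fun p _ => by rw [netOf_pair]
      _ = ∏ p : ↥(pairsLT n), ∑ b : Bool, h p.1 b := by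
          rw [Finset.prod_univ_sum]
          rw [Fintype.piFinset_univ]
      _ = ∏ p : ↥(pairsLT n),
            bern (1 / (Real.exp ε + 1)
              + (Real.exp ε - 1) / (Real.exp ε + 1) * B (θ p.1.1) (θ p.1.2))
              (A p.1.1 p.1.2) := by
          exact Finset.prod_congr rfl fun p _ => rr_key ε _ _
      _ = sbmMass θ
            (Matrix.of fun a b =>
              1 / (Real.exp ε + 1) + (Real.exp ε - 1) / (Real.exp ε + 1) * B a b) A := by
          rw [sbmMass, if_pos hA, Finset.univ_eq_attach,
            ← Finset.prod_attach (pairsLT n)]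
          exact Finset.prod_congr rfl fun p _ => rfl
  · simp [sbmMass, efMass, hA]
end
end

section
/- Let Û and U be n×k real matrices and Q a k×k orthogonal matrix, and suppose every row of U is nonzero. Let I_0 = {i ∈ [n] : Û_{i*} = 0} be the set of indices of zero rows of Û. Then |I_0| ≤ ‖Û − U Q‖_F · √(Σ_{i=1}^n ‖U_{i*}‖₂^{-2}). -/
/-!
STATEMENT 12: let `Û` and `U` be `n×k` real matrices and `Q` a `k×k` orthogonal
matrix, with every row of `U` nonzero.  If `I₀` is the set of indices of zero rows of
`Û`, then `|I₀| ≤ ‖Û − U Q‖_F · √(Σ_i ‖U_{i*}‖₂⁻²)`.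
-/

open scoped BigOperators
open Matrix

noncomputable section

attribute [local instance] Classical.propDecidable

/-- Frobenius norm of an `n × k` real matrix. -/
def frob {n k : ℕ} (A : Matrix (Fin n) (Fin k) ℝ) : ℝ :=
  Real.sqrt (∑ i, ∑ j, A i j ^ 2)

/-- the number of zero rows of `Û` is controlled by the Frobenius
distance to `U Q` and the inverse squared row norms of `U`. -/
theorem zero_rows_bound (n k : ℕ) (Uh U : Matrix (Fin n) (Fin k) ℝ)
    (Q : Matrix (Fin k) (Fin k) ℝ) (hQ : Qᵀ * Q = 1)
    (hU : ∀ i, ∃ j, U i j ≠ 0) :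
    ((Finset.univ.filter fun i => ∀ j, Uh i j = 0).card : ℝ) ≤
      frob (Uh - U * Q) * Real.sqrt (∑ i, (∑ j, U i j ^ 2)⁻¹) := by
  classical
  set A : Matrix (Fin n) (Fin k) ℝ := Uh - U * Q with hA
  set S : Finset (Fin n) := Finset.univ.filter fun i => ∀ j, Uh i j = 0 with hS
  set a : Fin n → ℝ := fun i => ∑ j, A i j ^ 2 with ha
  set b : Fin n → ℝ := fun i => (∑ j, U i j ^ 2)⁻¹ with hb
  have ha0 : ∀ i, 0 ≤ a i := fun i => Finset.sum_nonneg fun j _ => sq_nonneg _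
  have hb0 : ∀ i, 0 ≤ b i := fun i =>
    inv_nonneg.mpr (Finset.sum_nonneg fun j _ => sq_nonneg _)
  have hQQ : Q * Qᵀ = 1 := mul_eq_one_comm.mp hQ
  have hrow : ∀ i, ∑ j, (U * Q) i j ^ 2 = ∑ j, U i j ^ 2 := by
    intro i
    have hM : (U * Q) * (U * Q)ᵀ = U * Uᵀ := by
      rw [Matrix.transpose_mul, Matrix.mul_assoc, ← Matrix.mul_assoc Q, hQQ,
        Matrix.one_mul]
    have h := congrArg (fun M : Matrix (Fin n) (Fin n) ℝ => M i i) hM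
    simpa [Matrix.mul_apply, Matrix.transpose_apply, sq, mul_comm] using h
  have hUpos : ∀ i, 0 < ∑ j, U i j ^ 2 := by
    intro i
    obtain ⟨j, hj⟩ := hU i
    exact Finset.sum_pos' (fun j _ => sq_nonneg _)
      ⟨j, Finset.mem_univ j, by positivity⟩
  -- on S, a i * b i = 1
  have hab : ∀ i ∈ S, a i * b i = 1 := by
    intro i hi
    have hiz : ∀ j, Uh i j = 0 := (Finset.mem_filter.mp hi).2
    have : a i = ∑ j, U i j ^ 2 := by
      rw [← hrow i]
      apply Finset.sum_congr rfl
      intro j _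
      simp [ha, hA, hiz j]
    rw [this, hb]
    exact mul_inv_cancel₀ (ne_of_gt (hUpos i))
  have key : (S.card : ℝ) = ∑ i ∈ S, Real.sqrt (a i) * Real.sqrt (b i) := by
    rw [Finset.card_eq_sum_ones, Nat.cast_sum]
    apply Finset.sum_congr rfl
    intro i hi
    rw [← Real.sqrt_mul (ha0 i), hab i hi, Real.sqrt_one, Nat.cast_one]
  have hle1 : ∑ i ∈ S, Real.sqrt (a i) * Real.sqrt (b i) ≤
      ∑ i, Real.sqrt (a i) * Real.sqrt (b i) :=
    Finset.sum_le_sum_of_subset_of_nonneg (Finset.subset_univ S)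
      (fun i _ _ => mul_nonneg (Real.sqrt_nonneg _) (Real.sqrt_nonneg _))
  have hCS : ∑ i, Real.sqrt (a i) * Real.sqrt (b i) ≤
      Real.sqrt (∑ i, a i) * Real.sqrt (∑ i, b i) := by
    have h2 := Finset.sum_mul_sq_le_sq_mul_sq Finset.univ
      (fun i => Real.sqrt (a i)) (fun i => Real.sqrt (b i))
    simp only [Real.sq_sqrt (ha0 _), Real.sq_sqrt (hb0 _)] at h2
    have hnn : 0 ≤ ∑ i, Real.sqrt (a i) * Real.sqrt (b i) :=
      Finset.sum_nonneg fun i _ => mul_nonneg (Real.sqrt_nonneg _) (Real.sqrt_nonneg _)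
    calc ∑ i, Real.sqrt (a i) * Real.sqrt (b i)
        = Real.sqrt ((∑ i, Real.sqrt (a i) * Real.sqrt (b i)) ^ 2) :=
          (Real.sqrt_sq hnn).symm
      _ ≤ Real.sqrt ((∑ i, a i) * (∑ i, b i)) := Real.sqrt_le_sqrt h2
      _ = Real.sqrt (∑ i, a i) * Real.sqrt (∑ i, b i) :=
          Real.sqrt_mul (Finset.sum_nonneg fun i _ => ha0 i) _
  have hfrob : frob A = Real.sqrt (∑ i, a i) := rfl
  calc (S.card : ℝ) = ∑ i ∈ S, Real.sqrt (a i) * Real.sqrt (b i) := key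
    _ ≤ ∑ i, Real.sqrt (a i) * Real.sqrt (b i) := hle1
    _ ≤ Real.sqrt (∑ i, a i) * Real.sqrt (∑ i, b i) := hCS
    _ = frob A * Real.sqrt (∑ i, b i) := by rw [hfrob]

end
end

section
/- Let Û and U be n×k real matrices, Q a k×k orthogonal matrix, and suppose every row of U is nonzero. Let I_+ = {i ∈ [n] : Û_{i*} ≠ 0}, and let Û' be the |I_+|×k matrix whose rows are the rows Û_{i*}/‖Û_{i*}‖₂ for i ∈ I_+, and let U'' be the |I_+|×k matrix whose rows are (UQ)_{i*}/‖(UQ)_{i*}‖₂ for i ∈ I_+. Then ‖Û' − U''‖_{2,1} ≤ 2 ‖Û − U Q‖_F · √(Σ_{i=1}^n ‖U_{i*}‖₂^{-2}), where ‖A‖_{2,1} = Σ_i ‖A_{i*}‖₂. -/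
/-!
STATEMENT 13: let `Û`, `U` be `n×k` real matrices, `Q` a `k×k` orthogonal matrix, and
suppose every row of `U` is nonzero.  Let `I₊` be the set of indices of nonzero rows
of `Û`, let `Û'` have rows `Û_{i*}/‖Û_{i*}‖₂` for `i ∈ I₊` and `U''` have rows
`(UQ)_{i*}/‖(UQ)_{i*}‖₂` for `i ∈ I₊`.  Then
`‖Û' − U''‖_{2,1} ≤ 2 ‖Û − U Q‖_F √(Σ_{i=1}^n ‖U_{i*}‖₂⁻²)`, where
`‖A‖_{2,1} = Σ_i ‖A_{i*}‖₂`.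
-/

open scoped BigOperators
open Matrix

noncomputable section

attribute [local instance] Classical.propDecidable

/-- Euclidean norm of a row vector. -/
def rowNorm {k : ℕ} (x : Fin k → ℝ) : ℝ := Real.sqrt (∑ j, x j ^ 2)

/-!
For `y ≠ 0` the triangle inequality gives `‖x/‖x‖ - y/‖y‖‖ ≤ 2 ‖x - y‖ / ‖y‖`, and right multiplication by an orthogonal `Q` preserves
row norms, so row `i` contributes at most `2 ‖Û_{i*} - (UQ)_{i*}‖₂ / ‖U_{i*}‖₂`. Summing over all
rows and applying Cauchy–Schwarz gives the Frobenius norm times `√(Σ ‖U_{i*}‖₂⁻²)`.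
-/

open Finset

namespace NormedSpace

theorem norm_normalize_sub_normalize_le {E : Type*} [NormedAddCommGroup E] [NormedSpace ℝ E]
    (x : E) {y : E} (hy : y ≠ 0) :
    ‖normalize x - normalize y‖ ≤ 2 * ‖x - y‖ / ‖y‖ := by
  rcases eq_or_ne x 0 with rfl | hx
  · rw [normalize_zero_eq_zero, zero_sub, norm_neg, norm_normalize hy, zero_sub, norm_neg,
      mul_div_assoc, div_self (norm_ne_zero_iff.mpr hy)]
    norm_num
  have hxn : 0 < ‖x‖ := norm_pos_iff.mpr hx
  have hyn : 0 < ‖y‖ := norm_pos_iff.mpr hy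
  have hsplit : normalize x - normalize y = ‖y‖⁻¹ • (x - y) + (‖x‖⁻¹ - ‖y‖⁻¹) • x := by
    simp only [NormedSpace.normalize, smul_sub, sub_smul]
    abel
  have hscale : ‖(‖x‖⁻¹ - ‖y‖⁻¹) • x‖ ≤ ‖x - y‖ / ‖y‖ := by
    calc ‖(‖x‖⁻¹ - ‖y‖⁻¹) • x‖ = |‖x‖ - ‖y‖| / ‖y‖ := by
          rw [norm_smul, Real.norm_eq_abs, inv_sub_inv hxn.ne' hyn.ne', abs_div,
            abs_of_pos (mul_pos hxn hyn), abs_sub_comm]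
          field_simp
      _ ≤ ‖x - y‖ / ‖y‖ := by gcongr; exact abs_norm_sub_norm_le x y
  calc ‖normalize x - normalize y‖
      ≤ ‖‖y‖⁻¹ • (x - y)‖ + ‖(‖x‖⁻¹ - ‖y‖⁻¹) • x‖ := hsplit ▸ norm_add_le _ _
    _ ≤ ‖x - y‖ / ‖y‖ + ‖x - y‖ / ‖y‖ := by
        rw [norm_smul, norm_inv, norm_norm, inv_mul_eq_div]
        gcongr
    _ = 2 * ‖x - y‖ / ‖y‖ := by ring

end NormedSpace

section RowNorm

variable {k : ℕ}

theorem rowNorm_eq_norm (x : Fin k → ℝ) : rowNorm x = ‖WithLp.toLp 2 x‖ := by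
  simp [rowNorm, EuclideanSpace.norm_eq, sq_abs]

theorem rowNorm_ne_zero {x : Fin k → ℝ} : rowNorm x ≠ 0 ↔ x ≠ 0 := by
  simp [rowNorm_eq_norm]

theorem rowNorm_eq_sqrt_dotProduct (x : Fin k → ℝ) : rowNorm x = Real.sqrt (x ⬝ᵥ x) := by
  simp only [rowNorm, dotProduct, sq]

theorem rowNorm_vecMul_of_mul_transpose_eq_one {m : ℕ} (v : Fin k → ℝ)
    {Q : Matrix (Fin k) (Fin m) ℝ} (hQ : Q * Qᵀ = 1) : rowNorm (v ᵥ* Q) = rowNorm v := by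
  rw [rowNorm_eq_sqrt_dotProduct, rowNorm_eq_sqrt_dotProduct, ← dotProduct_mulVec,
    ← mulVec_transpose, mulVec_mulVec, hQ, one_mulVec]

theorem rowNorm_div_rowNorm_sub_le (x : Fin k → ℝ) {y : Fin k → ℝ} (hy : y ≠ 0) :
    rowNorm (fun j => x j / rowNorm x - y j / rowNorm y) ≤ 2 * rowNorm (x - y) / rowNorm y := by
  have hnormalize : (fun j => x j / rowNorm x - y j / rowNorm y) =
      WithLp.ofLp
        (NormedSpace.normalize (WithLp.toLp 2 x) - NormedSpace.normalize (WithLp.toLp 2 y)) := by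
    ext j
    simp [NormedSpace.normalize, rowNorm_eq_norm, div_eq_inv_mul]
  rw [hnormalize]
  simp only [rowNorm_eq_norm, WithLp.toLp_ofLp]
  exact NormedSpace.norm_normalize_sub_normalize_le _ (by simpa using hy)

end RowNorm

theorem frob_eq_sqrt_sum_rowNorm_sq {n k : ℕ} (A : Matrix (Fin n) (Fin k) ℝ) :
    frob A = Real.sqrt (∑ i, rowNorm (A i) ^ 2) := by
  simp [frob, rowNorm, Real.sq_sqrt, sum_nonneg, sq_nonneg]

theorem sum_rowNorm_div_rowNorm_le {n k m : ℕ} (A : Matrix (Fin n) (Fin k) ℝ)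
    (B : Matrix (Fin n) (Fin m) ℝ) :
    ∑ i, rowNorm (A i) / rowNorm (B i) ≤ frob A * Real.sqrt (∑ i, (∑ j, B i j ^ 2)⁻¹) := by
  have hB : ∀ i, (rowNorm (B i))⁻¹ ^ 2 = (∑ j, B i j ^ 2)⁻¹ := fun i => by
    rw [inv_pow, rowNorm, Real.sq_sqrt (sum_nonneg fun j _ => sq_nonneg _)]
  simpa only [div_eq_mul_inv, frob_eq_sqrt_sum_rowNorm_sq, hB] using
    Real.sum_mul_le_sqrt_mul_sqrt univ (fun i => rowNorm (A i)) (fun i => (rowNorm (B i))⁻¹)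

/-- the `(2,1)`-distance between the row-normalized nonzero rows of
`Û` and the corresponding row-normalized rows of `U Q` is controlled by the Frobenius
distance and the inverse squared row norms of `U`. -/
theorem normalized_rows_bound (n k : ℕ) (Uh U : Matrix (Fin n) (Fin k) ℝ)
    (Q : Matrix (Fin k) (Fin k) ℝ) (hQ : Qᵀ * Q = 1)
    (hU : ∀ i, ∃ j, U i j ≠ 0) :
    ∑ i ∈ Finset.univ.filter (fun i => ∃ j, Uh i j ≠ 0),
        rowNorm (fun j => Uh i j / rowNorm (Uh i) - (U * Q) i j / rowNorm ((U * Q) i)) ≤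
      2 * frob (Uh - U * Q) * Real.sqrt (∑ i, (∑ j, U i j ^ 2)⁻¹) := by
  have hUQ : ∀ i, rowNorm ((U * Q) i) = rowNorm (U i) := fun i =>
    rowNorm_vecMul_of_mul_transpose_eq_one (U i) (mul_eq_one_comm.mp hQ)
  have hUQ0 : ∀ i, (U * Q) i ≠ 0 := fun i => by
    rw [← rowNorm_ne_zero, hUQ, rowNorm_ne_zero]
    exact Function.ne_iff.mpr (hU i)
  calc _ ≤ ∑ i ∈ univ.filter (fun i => ∃ j, Uh i j ≠ 0),
          2 * (rowNorm ((Uh - U * Q) i) / rowNorm (U i)) := sum_le_sum fun i _ => by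
        rw [← hUQ i, ← mul_div_assoc]
        exact rowNorm_div_rowNorm_sub_le _ (hUQ0 i)
    _ ≤ ∑ i, 2 * (rowNorm ((Uh - U * Q) i) / rowNorm (U i)) :=
        sum_le_sum_of_subset_of_nonneg (filter_subset _ _) fun i _ _ =>
          mul_nonneg zero_le_two (div_nonneg (Real.sqrt_nonneg _) (Real.sqrt_nonneg _))
    _ = 2 * ∑ i, rowNorm ((Uh - U * Q) i) / rowNorm (U i) := (mul_sum _ _ _).symm
    _ ≤ _ := by
        rw [mul_assoc]
        gcongr
        exact sum_rowNorm_div_rowNorm_le _ _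

end
end
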